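/- For all p, p₁ ∈ ℝ³ the Moller velocity v_M = g·s^{1/2}/(p₀p₁₀) satisfies v_M² = |p/p₀ − p₁/p₁₀|² − |p×p₁|²/(p₀p₁₀)², i.e., g²·s = p₀²p₁₀²·|p/p₀ − p₁/p₁₀|² − |p×p₁|². -/

import Mathlib

noncomputable section
open Real
open scoped RealInnerProductSpace

/-- ℝ³ with the Euclidean norm. -/
abbrev E3 := EuclideanSpace ℝ (Fin 3)

namespace EnskogK

/-- the relativistic energy `p₀ = √(1+|p|²)` -/
def p0 (p : E3) : ℝ := Real.sqrt (1 + ‖p‖ ^ 2)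

/-- the cross product on ℝ³ -/
def cross (u v : E3) : E3 :=
  (WithLp.equiv 2 (Fin 3 → ℝ)).symm
    (crossProduct ((WithLp.equiv 2 (Fin 3 → ℝ)) u) ((WithLp.equiv 2 (Fin 3 → ℝ)) v))

/-- the relative momentum `g = (1/2)√(|p₁−p|² − (p₁₀−p₀)²)` -/
def gmom (p p₁ : E3) : ℝ :=
  (1 / 2) * Real.sqrt (‖p₁ - p‖ ^ 2 - (p0 p₁ - p0 p) ^ 2)

/-- `s = (p₀+p₁₀)² − |p+p₁|²` -/
def smom (p p₁ : E3) : ℝ := (p0 p + p0 p₁) ^ 2 - ‖p + p₁‖ ^ 2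

end EnskogK

/-! Write `a = p₀`, `b = p₁₀`, `t = ⟪p, p₁⟫`. Using `a² = 1 + |p|²`, `b² = 1 + |p₁|²` and
Lagrange's identity `|p × p₁|² = |p|²|p₁|² − t²`, both sides equal `(ab − t)² − 1`: indeed
`4g² = 2(ab − 1 − t)` and `s = 2(ab + 1 − t)`. The square root in `g` is harmless since
`1 + t ≤ 1 + |p||p₁| ≤ ab`. -/

theorem one_add_inner_le_sqrt_mul_sqrt {F : Type*} [NormedAddCommGroup F] [InnerProductSpace ℝ F]
    (x y : F) : 1 + ⟪x, y⟫ ≤ √(1 + ‖x‖ ^ 2) * √(1 + ‖y‖ ^ 2) := by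
  have hxy : 1 + ‖x‖ * ‖y‖ ≤ √((1 + ‖x‖ ^ 2) * (1 + ‖y‖ ^ 2)) :=
    Real.le_sqrt_of_sq_le (by nlinarith [sq_nonneg (‖x‖ - ‖y‖)])
  rw [← Real.sqrt_mul (by positivity)]
  linarith [real_inner_le_norm x y]

theorem sq_mul_sq_mul_norm_inv_smul_sub_inv_smul_sq {F : Type*} [NormedAddCommGroup F]
    [NormedSpace ℝ F] {a b : ℝ} (ha : a ≠ 0) (hb : b ≠ 0) (x y : F) :
    a ^ 2 * b ^ 2 * ‖a⁻¹ • x - b⁻¹ • y‖ ^ 2 = ‖b • x - a • y‖ ^ 2 := by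
  have hscale : (a * b) • (a⁻¹ • x - b⁻¹ • y) = b • x - a • y := by
    rw [smul_sub, smul_smul, smul_smul]
    congr 2 <;> field_simp
  rw [← hscale, norm_smul, mul_pow, Real.norm_eq_abs, sq_abs, mul_pow]

namespace EnskogK

theorem norm_cross_sq (u v : E3) : ‖cross u v‖ ^ 2 = ‖u‖ ^ 2 * ‖v‖ ^ 2 - ⟪u, v⟫ ^ 2 := by
  simp only [← real_inner_self_eq_norm_sq, EuclideanSpace.inner_eq_star_dotProduct, star_trivial,
    cross, WithLp.equiv_apply, WithLp.equiv_symm_apply, cross_dot_cross,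
    dotProduct_comm v.ofLp u.ofLp]
  ring

theorem p0_sq (p : E3) : p0 p ^ 2 = 1 + ‖p‖ ^ 2 := Real.sq_sqrt (by positivity)

theorem p0_pos (p : E3) : 0 < p0 p := Real.sqrt_pos.2 (by positivity)

theorem norm_sub_sq_sub_p0_sub_sq (p q : E3) :
    ‖q - p‖ ^ 2 - (p0 q - p0 p) ^ 2 = 2 * (p0 p * p0 q - 1 - ⟪p, q⟫) := by
  rw [norm_sub_sq_real, real_inner_comm]
  linear_combination -p0_sq p - p0_sq q

theorem gmom_sq (p q : E3) : gmom p q ^ 2 = (p0 p * p0 q - 1 - ⟪p, q⟫) / 2 := by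
  have hreverse_cs : 1 + ⟪p, q⟫ ≤ p0 p * p0 q := one_add_inner_le_sqrt_mul_sqrt p q
  have hrad : 0 ≤ ‖q - p‖ ^ 2 - (p0 q - p0 p) ^ 2 := by
    rw [norm_sub_sq_sub_p0_sub_sq]
    linarith
  rw [gmom, mul_pow, Real.sq_sqrt hrad, norm_sub_sq_sub_p0_sub_sq]
  ring

theorem smom_eq (p q : E3) : smom p q = 2 * (p0 p * p0 q + 1 - ⟪p, q⟫) := by
  rw [smom, norm_add_sq_real]
  linear_combination p0_sq p + p0_sq q

end EnskogK

open EnskogK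

/-- The Moller velocity `v_M = g·s^{1/2}/(p₀p₁₀)` satisfies
`v_M² = |p/p₀ − p₁/p₁₀|² − |p×p₁|²/(p₀p₁₀)²`, i.e.
`g²·s = p₀²p₁₀²·|p/p₀ − p₁/p₁₀|² − |p×p₁|²`. -/
theorem moller_velocity_sq (p p₁ : E3) :
    gmom p p₁ ^ 2 * smom p p₁ =
      (p0 p) ^ 2 * (p0 p₁) ^ 2 * ‖(p0 p)⁻¹ • p - (p0 p₁)⁻¹ • p₁‖ ^ 2 -
        ‖cross p p₁‖ ^ 2 := by
  rw [gmom_sq, smom_eq, norm_cross_sq,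
    sq_mul_sq_mul_norm_inv_smul_sub_inv_smul_sq (p0_pos p).ne' (p0_pos p₁).ne',
    norm_sub_sq_real, norm_smul, norm_smul, real_inner_smul_left, real_inner_smul_right,
    Real.norm_of_nonneg (p0_pos p).le, Real.norm_of_nonneg (p0_pos p₁).le]
  linear_combination (p0 p₁ ^ 2 - ‖p₁‖ ^ 2) * p0_sq p + p0_sq p₁
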